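/- arXiv:1801.00137 — 6 statements merged into one kernel-verified Lean document; each statement's English description precedes it below -/
import Mathlib

section
/- Suppose (P*, λ*, μ*) is a KKT triple for the ED problem and P*_i > 0 for at least two distinct indices i. Then every bid profile b* ∈ ℝ^n satisfying λ* ≤ b*_i ≤ C_i'(P*_i) for all i is an efficient Nash equilibrium of the inelastic electricity market game. -/
/-!
By complementary slackness `C_i'(P*_i) = λ*` wherever `P*_i > 0`, so there `b*_i = λ*`, while every
bid is at least `λ*`: hence `P*` solves the ISO problem, and by the strict tangent inequality of the
strongly convex costs every ED optimum equals `P*`. Since `b*_i ≤ C_i'(P*_i)` with equality when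
`P*_i > 0`, each `P*_i` maximizes the profit at price `b*_i`. Bidding `b_i ≤ λ*` only lowers the
price `i` is paid; bidding `b_i > λ*` is undercut by a rival with positive output bidding `λ*`, so
the ISO dispatches nothing to `i`.
-/

open Finset

noncomputable section

/-- Feasible production profiles for the dispatch problems:
power balance `1ᵀP = 1ᵀP_d` and componentwise nonnegativity. -/
def Feasible {n : ℕ} (Pd P : Fin n → ℝ) : Prop :=
  (∑ i, P i = ∑ i, Pd i) ∧ ∀ i, 0 ≤ P i

/-- `P` is an optimizer of the ISO problem for bids `b`:
it minimizes `bᵀP` over the feasible set. -/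
def IsISOOpt {n : ℕ} (Pd b P : Fin n → ℝ) : Prop :=
  Feasible Pd P ∧ ∀ Q, Feasible Pd Q → ∑ i, b i * P i ≤ ∑ i, b i * Q i

/-- `P` is a minimizer of the economic dispatch (ED) problem. -/
def IsEDOpt {n : ℕ} (C : Fin n → ℝ → ℝ) (Pd P : Fin n → ℝ) : Prop :=
  Feasible Pd P ∧ ∀ Q, Feasible Pd Q → ∑ i, C i (P i) ≤ ∑ i, C i (Q i)

/-- `(P, lam, mu)` is a KKT triple for the ED problem, with `C' i` the marginal
cost of generator `i`. -/
def IsKKT {n : ℕ} (C' : Fin n → ℝ → ℝ) (Pd P : Fin n → ℝ) (lam : ℝ)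
    (mu : Fin n → ℝ) : Prop :=
  (∀ i, C' i (P i) = lam + mu i) ∧ (∑ i, P i = ∑ i, Pd i) ∧
    (∀ i, 0 ≤ P i) ∧ (∀ i, 0 ≤ mu i) ∧ (∑ i, P i * mu i = 0)

/-- Payoff of a generator with cost `Ci` bidding `bi` and producing `Pi`. -/
def Payoff (Ci : ℝ → ℝ) (bi Pi : ℝ) : ℝ := Pi * bi - Ci Pi

/-- `bstar` is a Nash equilibrium of the inelastic electricity market game. -/
def IsNash {n : ℕ} (C : Fin n → ℝ → ℝ) (Pd bstar : Fin n → ℝ) : Prop :=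
  (∀ i, 0 ≤ bstar i) ∧
  ∃ P0, IsISOOpt Pd bstar P0 ∧
    ∀ i (bi : ℝ), 0 ≤ bi → bi ≠ bstar i →
      ∀ P, IsISOOpt Pd (Function.update bstar i bi) P →
        Payoff (C i) bi (P i) ≤ Payoff (C i) (bstar i) (P0 i)

/-- `bstar` is an efficient bid: the optimizer of the ED problem is also an
optimizer of the ISO problem for bids `bstar`, and each `Pstar i` maximizes
the profit `P ↦ P * bstar i - C i P` over `P ≥ 0`. -/
def IsEfficientBid {n : ℕ} (C : Fin n → ℝ → ℝ) (Pd bstar : Fin n → ℝ) : Prop :=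
  (∀ i, 0 ≤ bstar i) ∧
  ∀ Pstar, IsEDOpt C Pd Pstar →
    IsISOOpt Pd bstar Pstar ∧
      ∀ i, ∀ P, 0 ≤ P → Payoff (C i) (bstar i) P ≤ Payoff (C i) (bstar i) (Pstar i)

/-- Standing assumptions on a generator cost function: continuously
differentiable with derivative `Cf'`, strongly convex on `[0, ∞)`, and
nonnegative marginal cost at zero. -/
def CostAssumptions (Cf Cf' : ℝ → ℝ) : Prop :=
  (∀ x, HasDerivAt Cf (Cf' x) x) ∧ Continuous Cf' ∧
    (∃ m : ℝ, 0 < m ∧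
      ∀ x y, 0 ≤ x → 0 ≤ y → (Cf' x - Cf' y) * (x - y) ≥ m * (x - y) ^ 2) ∧
    0 ≤ Cf' 0

/-- `P` is the unique maximizer of the profit `Q ↦ β * Q - Cf Q` over `Q ≥ 0`. -/
def IsUniqueArgmaxProfit (Cf : ℝ → ℝ) (β P : ℝ) : Prop :=
  0 ≤ P ∧ (∀ Q, 0 ≤ Q → β * Q - Cf Q ≤ β * P - Cf P) ∧
    ∀ Q, 0 ≤ Q → (∀ R, 0 ≤ R → β * R - Cf R ≤ β * Q - Cf Q) → Q = P

namespace CostAssumptions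

variable {Cf Cf' : ℝ → ℝ}

lemma strictMonoOn (h : CostAssumptions Cf Cf') : StrictMonoOn Cf' (Set.Ici 0) := by
  intro x hx y hy hxy
  obtain ⟨m, hm, hsc⟩ := h.2.2.1
  have hpos : 0 < (Cf' y - Cf' x) * (y - x) :=
    (mul_pos hm (pow_pos (sub_pos.2 hxy) 2)).trans_le (hsc y x hy hx)
  exact sub_pos.1 (pos_of_mul_pos_left hpos (sub_pos.2 hxy).le)

lemma strictConvexOn (h : CostAssumptions Cf Cf') : StrictConvexOn ℝ (Set.Ici 0) Cf := by
  have hderiv : deriv Cf = Cf' := funext fun x => (h.1 x).deriv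
  refine StrictMonoOn.strictConvexOn_of_deriv (convex_Ici 0)
    (fun x _ => (h.1 x).continuousAt.continuousWithinAt) ?_
  rw [hderiv]
  exact h.strictMonoOn.mono interior_subset

lemma add_deriv_mul_sub_lt (h : CostAssumptions Cf Cf') {x y : ℝ} (hx : 0 ≤ x) (hy : 0 ≤ y)
    (hxy : x ≠ y) : Cf x + Cf' x * (y - x) < Cf y := by
  rcases hxy.lt_or_gt with hlt | hlt
  · have := h.strictConvexOn.lt_slope_of_hasDerivAt hx hy hlt (h.1 x)
    rw [slope_def_field, lt_div_iff₀ (sub_pos.2 hlt)] at this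
    linarith
  · have := h.strictConvexOn.slope_lt_of_hasDerivAt hy hx hlt (h.1 x)
    rw [slope_def_field, div_lt_iff₀ (sub_pos.2 hlt)] at this
    linarith

lemma add_deriv_mul_sub_le (h : CostAssumptions Cf Cf') {x y : ℝ} (hx : 0 ≤ x) (hy : 0 ≤ y) :
    Cf x + Cf' x * (y - x) ≤ Cf y := by
  rcases eq_or_ne x y with rfl | hxy
  · simp
  · exact (h.add_deriv_mul_sub_lt hx hy hxy).le

lemma payoff_le_of_le_deriv (h : CostAssumptions Cf Cf') {β P Q : ℝ} (hP : 0 ≤ P) (hQ : 0 ≤ Q)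
    (hβ : β ≤ Cf' P) (hslack : (Cf' P - β) * P = 0) : Payoff Cf β Q ≤ Payoff Cf β P := by
  have := h.add_deriv_mul_sub_le hP hQ
  unfold Payoff
  nlinarith [mul_nonneg (sub_nonneg.2 hβ) hQ]

end CostAssumptions

lemma payoff_le_payoff_of_le (Cf : ℝ → ℝ) {b b' P : ℝ} (hP : 0 ≤ P) (hb : b ≤ b') :
    Payoff Cf b P ≤ Payoff Cf b' P :=
  sub_le_sub_right (mul_le_mul_of_nonneg_left hb hP) _

section

variable {n : ℕ}

lemma isISOOpt_of_forall_le {Pd b P : Fin n → ℝ} {lam : ℝ} (hP : Feasible Pd P)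
    (hle : ∀ i, lam ≤ b i) (heq : ∀ i, 0 < P i → b i = lam) : IsISOOpt Pd b P := by
  refine ⟨hP, fun Q hQ => ?_⟩
  have hbP : ∀ i, b i * P i = lam * P i := fun i => by
    rcases (hP.2 i).eq_or_lt with h | h
    · rw [← h, mul_zero, mul_zero]
    · rw [heq i h]
  calc ∑ i, b i * P i = lam * ∑ i, Q i := by
        rw [Finset.sum_congr rfl fun i _ => hbP i, ← Finset.mul_sum, hP.1, hQ.1]
    _ ≤ ∑ i, b i * Q i := by
        rw [Finset.mul_sum]
        exact Finset.sum_le_sum fun i _ => mul_le_mul_of_nonneg_right (hle i) (hQ.2 i)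

lemma IsISOOpt.eq_zero_of_lt {Pd b P : Fin n → ℝ} (hP : IsISOOpt Pd b P) {i j : Fin n}
    (hji : b j < b i) : P i = 0 := by
  have hij : i ≠ j := fun h => hji.ne' (h ▸ rfl)
  -- move generator `i`'s output to the cheaper generator `j`
  set Q : Fin n → ℝ := fun k =>
    P k + P i * ((Pi.single j 1 : Fin n → ℝ) k - (Pi.single i 1 : Fin n → ℝ) k)
  have hsum : ∀ c : Fin n → ℝ, ∑ k, c k * Q k = ∑ k, c k * P k + (c j - c i) * P i := by
    intro c
    simp only [Q, mul_add, mul_sub, Finset.sum_add_distrib, Finset.sum_sub_distrib,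
      Pi.single_apply, mul_ite, mul_one, mul_zero, Finset.sum_ite_eq', Finset.mem_univ, if_true]
    ring
  have hQ : Feasible Pd Q := by
    refine ⟨by simpa using (hsum 1).trans (by simpa using hP.1.1), fun k => ?_⟩
    rcases eq_or_ne k i with rfl | hki
    · simp [Q, hij]
    · rcases eq_or_ne k j with rfl | hkj
      · simpa [Q, hki] using add_nonneg (hP.1.2 k) (hP.1.2 i)
      · simpa [Q, hki, hkj] using hP.1.2 k
  have hopt := hP.2 Q hQ
  rw [hsum] at hopt
  nlinarith [hP.1.2 i]

namespace IsKKT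

variable {C' : Fin n → ℝ → ℝ} {Pd P mu : Fin n → ℝ} {lam : ℝ}

lemma feasible (h : IsKKT C' Pd P lam mu) : Feasible Pd P := ⟨h.2.1, h.2.2.1⟩

lemma mul_mu_eq_zero (h : IsKKT C' Pd P lam mu) (i : Fin n) : P i * mu i = 0 :=
  (Finset.sum_eq_zero_iff_of_nonneg fun j _ => mul_nonneg (h.2.2.1 j) (h.2.2.2.1 j)).1
    h.2.2.2.2 i (Finset.mem_univ i)

lemma deriv_eq_of_pos (h : IsKKT C' Pd P lam mu) {i : Fin n} (hi : 0 < P i) :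
    C' i (P i) = lam := by
  rw [h.1 i, (mul_eq_zero.1 (h.mul_mu_eq_zero i)).resolve_left hi.ne', add_zero]

lemma lam_pos {Ci : ℝ → ℝ} (h : IsKKT C' Pd P lam mu) {i : Fin n}
    (hCi : CostAssumptions Ci (C' i)) (hi : 0 < P i) : 0 < lam := by
  rw [← h.deriv_eq_of_pos hi]
  exact hCi.2.2.2.trans_lt (hCi.strictMonoOn Set.self_mem_Ici hi.le hi)

lemma sum_deriv_mul_sub_nonneg (h : IsKKT C' Pd P lam mu) {Q : Fin n → ℝ}
    (hQ : Feasible Pd Q) : 0 ≤ ∑ i, C' i (P i) * (Q i - P i) := by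
  have hsplit : ∑ i, C' i (P i) * (Q i - P i)
      = lam * (∑ i, Q i - ∑ i, P i) + ∑ i, mu i * Q i - ∑ i, P i * mu i := by
    simp only [h.1, Finset.mul_sum, ← Finset.sum_sub_distrib, ← Finset.sum_add_distrib]
    exact Finset.sum_congr rfl fun i _ => by ring
  rw [hsplit, hQ.1, h.2.1, h.2.2.2.2, sub_self, mul_zero, zero_add, sub_zero]
  exact Finset.sum_nonneg fun i _ => mul_nonneg (h.2.2.2.1 i) (hQ.2 i)

variable {C : Fin n → ℝ → ℝ}

lemma eq_of_isEDOpt (h : IsKKT C' Pd P lam mu) (hC : ∀ i, CostAssumptions (C i) (C' i))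
    {Q : Fin n → ℝ} (hQ : IsEDOpt C Pd Q) : Q = P := by
  by_contra hne
  obtain ⟨k, hk⟩ := Function.ne_iff.1 hne
  have hlin := h.sum_deriv_mul_sub_nonneg hQ.1
  have htangent : ∑ i, (C i (P i) + C' i (P i) * (Q i - P i)) < ∑ i, C i (Q i) :=
    Finset.sum_lt_sum (fun i _ => (hC i).add_deriv_mul_sub_le (h.feasible.2 i) (hQ.1.2 i))
      ⟨k, Finset.mem_univ k, (hC k).add_deriv_mul_sub_lt (h.feasible.2 k) (hQ.1.2 k) (Ne.symm hk)⟩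
  rw [Finset.sum_add_distrib] at htangent
  linarith [hQ.2 P h.feasible]

end IsKKT

end

theorem efficient_nash_characterization_general {n : ℕ}
    (C C' : Fin n → ℝ → ℝ) (hC : ∀ i, CostAssumptions (C i) (C' i))
    (Pd : Fin n → ℝ)
    (Pstar : Fin n → ℝ) (lam : ℝ) (mu : Fin n → ℝ)
    (hKKT : IsKKT C' Pd Pstar lam mu)
    (htwo : ∃ i j, i ≠ j ∧ 0 < Pstar i ∧ 0 < Pstar j)
    (bstar : Fin n → ℝ)
    (hb : ∀ i, lam ≤ bstar i ∧ bstar i ≤ C' i (Pstar i)) :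
    IsEfficientBid C Pd bstar ∧ IsNash C Pd bstar := by
  obtain ⟨i₀, j₀, hij, hi₀, hj₀⟩ := htwo
  have hbeq : ∀ i, 0 < Pstar i → bstar i = lam := fun i hi =>
    le_antisymm ((hb i).2.trans_eq (hKKT.deriv_eq_of_pos hi)) (hb i).1
  have hbnn : ∀ i, 0 ≤ bstar i := fun i => (hKKT.lam_pos (hC i₀) hi₀).le.trans (hb i).1
  have hISO : IsISOOpt Pd bstar Pstar :=
    isISOOpt_of_forall_le hKKT.feasible (fun i => (hb i).1) hbeq
  have hprofit : ∀ i Q, 0 ≤ Q → Payoff (C i) (bstar i) Q ≤ Payoff (C i) (bstar i) (Pstar i) := by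
    intro i Q hQ
    refine (hC i).payoff_le_of_le_deriv (hKKT.feasible.2 i) hQ (hb i).2 ?_
    rcases (hKKT.feasible.2 i).eq_or_lt with h | h
    · rw [← h, mul_zero]
    · rw [hbeq i h, hKKT.deriv_eq_of_pos h, sub_self, zero_mul]
  refine ⟨⟨hbnn, fun P hP => hKKT.eq_of_isEDOpt hC hP ▸ ⟨hISO, hprofit⟩⟩,
    hbnn, Pstar, hISO, fun i bi _ _ P hP => ?_⟩
  rcases le_or_gt bi lam with hlow | hhigh
  · calc Payoff (C i) bi (P i) ≤ Payoff (C i) (bstar i) (P i) :=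
          payoff_le_payoff_of_le _ (hP.1.2 i) (hlow.trans (hb i).1)
      _ ≤ _ := hprofit i _ (hP.1.2 i)
  · obtain ⟨j, hji, hj⟩ : ∃ j, j ≠ i ∧ 0 < Pstar j := by
      by_cases h : i₀ = i
      · exact ⟨j₀, h ▸ hij.symm, hj₀⟩
      · exact ⟨i₀, h, hi₀⟩
    have hPi : P i = 0 := hP.eq_zero_of_lt (j := j) (by
      rwa [Function.update_self, Function.update_of_ne hji, hbeq j hj])
    calc Payoff (C i) bi (P i) = Payoff (C i) (bstar i) 0 := by simp [Payoff, hPi]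
      _ ≤ _ := hprofit i 0 le_rfl

/-- If `(Pstar, lam, mu)` is a KKT triple for the ED problem and
`Pstar i > 0` for at least two distinct indices, then every bid profile `bstar`
with `lam ≤ bstar i ≤ C' i (Pstar i)` for all `i` is an efficient Nash
equilibrium of the inelastic electricity market game. -/
theorem efficient_nash_characterization {n : ℕ} (hn : 2 ≤ n)
    (C C' : Fin n → ℝ → ℝ) (hC : ∀ i, CostAssumptions (C i) (C' i))
    (Pd : Fin n → ℝ) (hPd : ∀ i, 0 ≤ Pd i) (hPdpos : 0 < ∑ i, Pd i)
    (Pstar : Fin n → ℝ) (lam : ℝ) (mu : Fin n → ℝ)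
    (hKKT : IsKKT C' Pd Pstar lam mu)
    (htwo : ∃ i j, i ≠ j ∧ 0 < Pstar i ∧ 0 < Pstar j)
    (bstar : Fin n → ℝ)
    (hb : ∀ i, lam ≤ bstar i ∧ bstar i ≤ C' i (Pstar i)) :
    IsEfficientBid C Pd bstar ∧ IsNash C Pd bstar :=
  efficient_nash_characterization_general C C' hC Pd Pstar lam mu hKKT htwo bstar hb
end
end

section
/- Suppose (P*, λ*, μ*) is a KKT triple for the ED problem and b* ∈ ℝ^n satisfies λ* ≤ b*_i ≤ C_i'(P*_i) for all i. Then P* is an optimizer of the ISO problem for bids b*, i.e., P* minimizes (b*)ᵀP over the set {P ∈ ℝ^n : 1ᵀP = 1ᵀP_d, P ≥ 0}. -/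
open Finset

noncomputable section

/-! Complementary slackness forces `mu i = 0`, hence `bstar i = lam`, wherever `Pstar i > 0`, so
`bstarᵀ Pstar = lam * 1ᵀPd`; and `bstar ≥ lam` gives `bstarᵀ Q ≥ lam * 1ᵀQ = lam * 1ᵀPd` for every
feasible `Q`. -/

section KKT

variable {n : ℕ} {C' : Fin n → ℝ → ℝ} {Pd P : Fin n → ℝ} {lam : ℝ} {mu : Fin n → ℝ}

theorem IsKKT.mul_mu_eq_zero_s1 (h : IsKKT C' Pd P lam mu) (i : Fin n) : P i * mu i = 0 :=
  (sum_eq_zero_iff_of_nonneg fun j _ => mul_nonneg (h.2.2.1 j) (h.2.2.2.1 j)).1 h.2.2.2.2 i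
    (mem_univ i)

theorem IsKKT.marginal_eq_of_pos (h : IsKKT C' Pd P lam mu) {i : Fin n} (hi : 0 < P i) :
    C' i (P i) = lam := by
  rw [h.1 i, (mul_eq_zero.1 (h.mul_mu_eq_zero_s1 i)).resolve_left hi.ne', add_zero]

end KKT

theorem isISOOpt_of_le_bid_of_bid_eq_of_pos {n : ℕ} {Pd b P : Fin n → ℝ} {lam : ℝ}
    (hP : Feasible Pd P) (hle : ∀ i, lam ≤ b i) (heq : ∀ i, 0 < P i → b i = lam) :
    IsISOOpt Pd b P := by
  refine ⟨hP, fun Q hQ => ?_⟩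
  have hbP : ∀ i, b i * P i = lam * P i := fun i => by
    rcases (hP.2 i).eq_or_lt with hi | hi
    · simp [← hi]
    · rw [heq i hi]
  calc ∑ i, b i * P i = lam * ∑ i, P i := by simp only [hbP, mul_sum]
    _ = lam * ∑ i, Q i := by rw [hP.1, hQ.1]
    _ ≤ ∑ i, b i * Q i := by
      rw [mul_sum]
      exact sum_le_sum fun i _ => mul_le_mul_of_nonneg_right (hle i) (hQ.2 i)

theorem kkt_bid_iso_optimal_general {n : ℕ}
    (C' : Fin n → ℝ → ℝ)
    (Pd : Fin n → ℝ)
    (Pstar : Fin n → ℝ) (lam : ℝ) (mu : Fin n → ℝ)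
    (hKKT : IsKKT C' Pd Pstar lam mu)
    (bstar : Fin n → ℝ)
    (hb : ∀ i, lam ≤ bstar i ∧ bstar i ≤ C' i (Pstar i)) :
    IsISOOpt Pd bstar Pstar :=
  isISOOpt_of_le_bid_of_bid_eq_of_pos ⟨hKKT.2.1, hKKT.2.2.1⟩ (fun i => (hb i).1) fun i hi =>
    le_antisymm ((hb i).2.trans_eq (hKKT.marginal_eq_of_pos hi)) (hb i).1

/-- If `(Pstar, lam, mu)` is a KKT triple for the ED problem and
`lam ≤ bstar i ≤ C' i (Pstar i)` for all `i`, then `Pstar` is an optimizer of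
the ISO problem for bids `bstar`. -/
theorem kkt_bid_iso_optimal {n : ℕ} (hn : 1 ≤ n)
    (C C' : Fin n → ℝ → ℝ) (hC : ∀ i, CostAssumptions (C i) (C' i))
    (Pd : Fin n → ℝ) (hPd : ∀ i, 0 ≤ Pd i) (hPdpos : 0 < ∑ i, Pd i)
    (Pstar : Fin n → ℝ) (lam : ℝ) (mu : Fin n → ℝ)
    (hKKT : IsKKT C' Pd Pstar lam mu)
    (bstar : Fin n → ℝ)
    (hb : ∀ i, lam ≤ bstar i ∧ bstar i ≤ C' i (Pstar i)) :
    IsISOOpt Pd bstar Pstar :=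
  kkt_bid_iso_optimal_general C' Pd Pstar lam mu hKKT bstar hb
end
end

section
/- Suppose (P*, λ*, μ*) is a KKT triple for the ED problem and b* ∈ ℝ^n satisfies λ* ≤ b*_i ≤ C_i'(P*_i) for all i. Then for every i, P*_i is a maximizer of the map P ↦ P b*_i − C_i(P) over P ≥ 0. -/
open Finset

noncomputable section

/-!
The profit `P ↦ P * b - C P` is concave because `C` has a monotone derivative, so by the
tangent-line inequality for `C` at `P*` the profit loss from moving to `P` is at least
`(C'(P*) - b) * (P - P*)`. This is nonnegative: if `P* > 0`, complementary slackness gives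
`μ* = 0`, hence `b = λ* = C'(P*)`; if `P* = 0`, then `P - P* ≥ 0` and `b ≤ C'(P*)`.
-/

lemma monotoneOn_of_sub_mul_sub_nonneg {f : ℝ → ℝ} {s : Set ℝ}
    (h : ∀ x ∈ s, ∀ y ∈ s, 0 ≤ (f x - f y) * (x - y)) : MonotoneOn f s := by
  intro x hx y hy hxy
  rcases hxy.eq_or_lt with rfl | hlt
  · exact le_rfl
  · exact sub_nonneg.mp (nonneg_of_mul_nonneg_left (h y hy x hx) (sub_pos.mpr hlt))

lemma convexOn_of_hasDerivAt_of_monotoneOn {f f' : ℝ → ℝ} {D : Set ℝ} (hD : Convex ℝ D)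
    (hf : ∀ x, HasDerivAt f (f' x) x) (hf' : MonotoneOn f' D) : ConvexOn ℝ D f := by
  have hderiv : deriv f = f' := funext fun x => (hf x).deriv
  refine MonotoneOn.convexOn_of_deriv hD (fun x _ => (hf x).continuousAt.continuousWithinAt)
    (fun x _ => (hf x).differentiableAt.differentiableWithinAt) ?_
  rw [hderiv]
  exact hf'.mono interior_subset

lemma ConvexOn.add_mul_sub_le_of_hasDerivAt {f : ℝ → ℝ} {S : Set ℝ} {x y f' : ℝ}
    (hf : ConvexOn ℝ S f) (hx : x ∈ S) (hy : y ∈ S) (hf' : HasDerivAt f f' x) :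
    f x + f' * (y - x) ≤ f y := by
  rcases lt_trichotomy x y with hxy | rfl | hyx
  · have := hf.le_slope_of_hasDerivAt hx hy hxy hf'
    rw [slope_def_field, le_div_iff₀ (sub_pos.mpr hxy)] at this
    linarith
  · simp
  · have := hf.slope_le_of_hasDerivAt hy hx hyx hf'
    rw [slope_def_field, div_le_iff₀ (sub_pos.mpr hyx)] at this
    linarith

lemma CostAssumptions.convexOn {Cf Cf' : ℝ → ℝ} (h : CostAssumptions Cf Cf') :
    ConvexOn ℝ (Set.Ici 0) Cf := by
  obtain ⟨hderiv, -, ⟨m, hm, hstrong⟩, -⟩ := h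
  refine convexOn_of_hasDerivAt_of_monotoneOn (convex_Ici 0) hderiv
    (monotoneOn_of_sub_mul_sub_nonneg fun x hx y hy => ?_)
  nlinarith [hstrong x y hx hy, mul_nonneg hm.le (sq_nonneg (x - y))]

lemma payoff_le_of_convexOn {Cf : ℝ → ℝ} {S : Set ℝ} {β p q d : ℝ} (hC : ConvexOn ℝ S Cf)
    (hp : p ∈ S) (hq : q ∈ S) (hd : HasDerivAt Cf d p) (hfoc : (β - d) * (q - p) ≤ 0) :
    Payoff Cf β q ≤ Payoff Cf β p := by
  have := hC.add_mul_sub_le_of_hasDerivAt hp hq hd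
  simp only [Payoff]
  nlinarith

lemma IsKKT.mu_eq_zero_of_pos {n : ℕ} {C' : Fin n → ℝ → ℝ} {Pd P : Fin n → ℝ} {lam : ℝ}
    {mu : Fin n → ℝ} (h : IsKKT C' Pd P lam mu) {i : Fin n} (hi : 0 < P i) : mu i = 0 := by
  obtain ⟨-, -, hP, hmu, hslack⟩ := h
  have hterm : P i * mu i = 0 :=
    (Finset.sum_eq_zero_iff_of_nonneg fun j _ => mul_nonneg (hP j) (hmu j)).mp hslack i
      (Finset.mem_univ i)
  exact (mul_eq_zero.mp hterm).resolve_left hi.ne'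

lemma IsKKT.bid_sub_mul_sub_nonpos {n : ℕ} {C' : Fin n → ℝ → ℝ} {Pd P : Fin n → ℝ} {lam : ℝ}
    {mu : Fin n → ℝ} (h : IsKKT C' Pd P lam mu) {i : Fin n} {β q : ℝ}
    (hβ : lam ≤ β ∧ β ≤ C' i (P i)) (hq : 0 ≤ q) :
    (β - C' i (P i)) * (q - P i) ≤ 0 := by
  obtain ⟨hstat, -, hP, -, -⟩ := id h
  rcases (hP i).eq_or_lt with hzero | hpos
  · exact mul_nonpos_of_nonpos_of_nonneg (sub_nonpos.mpr hβ.2) (by linarith)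
  · have hβeq : β = C' i (P i) := by
      have := hstat i
      rw [h.mu_eq_zero_of_pos hpos, add_zero] at this
      linarith [hβ.1]
    simp [hβeq]

theorem kkt_bid_profit_maximizer_general {n : ℕ}
    (C C' : Fin n → ℝ → ℝ) (hC : ∀ i, CostAssumptions (C i) (C' i))
    (Pd : Fin n → ℝ)
    (Pstar : Fin n → ℝ) (lam : ℝ) (mu : Fin n → ℝ)
    (hKKT : IsKKT C' Pd Pstar lam mu)
    (bstar : Fin n → ℝ)
    (hb : ∀ i, lam ≤ bstar i ∧ bstar i ≤ C' i (Pstar i)) :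
    ∀ i, ∀ P, 0 ≤ P →
      Payoff (C i) (bstar i) P ≤ Payoff (C i) (bstar i) (Pstar i) := by
  intro i P hP
  have hPstar : 0 ≤ Pstar i := hKKT.2.2.1 i
  exact payoff_le_of_convexOn (hC i).convexOn hPstar hP ((hC i).1 (Pstar i))
    (hKKT.bid_sub_mul_sub_nonpos (hb i) hP)

/-- If `(Pstar, lam, mu)` is a KKT triple for the ED problem and
`lam ≤ bstar i ≤ C' i (Pstar i)` for all `i`, then for every `i`, `Pstar i`
maximizes the profit `P ↦ P * bstar i - C i P` over `P ≥ 0`. -/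
theorem kkt_bid_profit_maximizer {n : ℕ} (hn : 1 ≤ n)
    (C C' : Fin n → ℝ → ℝ) (hC : ∀ i, CostAssumptions (C i) (C' i))
    (Pd : Fin n → ℝ) (hPd : ∀ i, 0 ≤ Pd i) (hPdpos : 0 < ∑ i, Pd i)
    (Pstar : Fin n → ℝ) (lam : ℝ) (mu : Fin n → ℝ)
    (hKKT : IsKKT C' Pd Pstar lam mu)
    (bstar : Fin n → ℝ)
    (hb : ∀ i, lam ≤ bstar i ∧ bstar i ≤ C' i (Pstar i)) :
    ∀ i, ∀ P, 0 ≤ P →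
      Payoff (C i) (bstar i) P ≤ Payoff (C i) (bstar i) (Pstar i) :=
  kkt_bid_profit_maximizer_general C C' hC Pd Pstar lam mu hKKT bstar hb
end
end

section
/- Let b* ≥ 0 be an efficient bid with associated ED optimizer P*. Fix a generator i and a deviating bid 0 ≤ b_i < b*_i. Then for every optimizer P of the ISO problem for bids (b_i, b*_{-i}), one has Π_i(b_i, P_i) ≤ Π_i(b*_i, P*_i). -/
open Finset

noncomputable section

theorem payoff_mono_bid (Ci : ℝ → ℝ) {b b' P : ℝ} (hP : 0 ≤ P) (hb : b ≤ b') :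
    Payoff Ci b P ≤ Payoff Ci b' P :=
  sub_le_sub_right (mul_le_mul_of_nonneg_left hb hP) _

theorem lower_bid_no_gain_general {n : ℕ}
    (C : Fin n → ℝ → ℝ)
    (Pd : Fin n → ℝ)
    (Pstar : Fin n → ℝ)
    (bstar : Fin n → ℝ)
    (hmax : ∀ i, ∀ P, 0 ≤ P →
      Payoff (C i) (bstar i) P ≤ Payoff (C i) (bstar i) (Pstar i))
    (i : Fin n) (bi : ℝ) (hbi : bi < bstar i) :
    ∀ P, IsISOOpt Pd (Function.update bstar i bi) P →
      Payoff (C i) bi (P i) ≤ Payoff (C i) (bstar i) (Pstar i) := by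
  intro P hP
  have hPi : 0 ≤ P i := hP.1.2 i
  calc Payoff (C i) bi (P i) ≤ Payoff (C i) (bstar i) (P i) := payoff_mono_bid (C i) hPi hbi.le
    _ ≤ Payoff (C i) (bstar i) (Pstar i) := hmax i (P i) hPi

/-- Let `bstar ≥ 0` be an efficient bid with associated ED
optimizer `Pstar`. If generator `i` deviates to a bid `0 ≤ bi < bstar i`,
then for every optimizer `P` of the ISO problem for bids `(bi, bstar_{-i})`
the deviation does not increase its payoff. -/
theorem lower_bid_no_gain {n : ℕ} (hn : 2 ≤ n)
    (C C' : Fin n → ℝ → ℝ) (hC : ∀ i, CostAssumptions (C i) (C' i))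
    (Pd : Fin n → ℝ) (hPd : ∀ i, 0 ≤ Pd i) (hPdpos : 0 < ∑ i, Pd i)
    (Pstar : Fin n → ℝ) (hED : IsEDOpt C Pd Pstar)
    (bstar : Fin n → ℝ) (hbstar : ∀ i, 0 ≤ bstar i)
    (hISO : IsISOOpt Pd bstar Pstar)
    (hmax : ∀ i, ∀ P, 0 ≤ P →
      Payoff (C i) (bstar i) P ≤ Payoff (C i) (bstar i) (Pstar i))
    (i : Fin n) (bi : ℝ) (hbi0 : 0 ≤ bi) (hbi : bi < bstar i) :
    ∀ P, IsISOOpt Pd (Function.update bstar i bi) P →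
      Payoff (C i) bi (P i) ≤ Payoff (C i) (bstar i) (Pstar i) :=
  lower_bid_no_gain_general C Pd Pstar bstar hmax i bi hbi
end
end

section
/- Let D ∈ ℝ^{n×m} satisfy 1ᵀD = 0 and rank(D) = n−1, let D_t ∈ ℝ^{n×(n−1)} satisfy 1ᵀD_t = 0 and rank(D_t) = n−1, and let Γ = diag(γ_1,…,γ_m) with γ_k > 0 for all k. Set D_t^† = (D_tᵀD_t)^{-1}D_tᵀ and define U : ℝ^{n−1} → ℝ by U(φ) = −1ᵀ Γ cos(Dᵀ D_t^{†T} φ) (cosine applied componentwise). Then for every φ ∈ ℝ^{n−1} such that each component of Dᵀ D_t^{†T} φ lies in the open interval (−π/2, π/2), the Hessian ∇²U(φ) = (D_t^† D) Γ diag(cos(Dᵀ D_t^{†T} φ)) (D_t^† D)ᵀ is positive definite. -/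
open Matrix Finset Real

lemma real_conjTranspose {p q : Type*} (A : Matrix p q ℝ) : Aᴴ = Aᵀ := by
  ext i j; simp [conjTranspose_apply]

lemma dotProduct_self_pos' {p : Type*} [Fintype p] {v : p → ℝ} (hv : v ≠ 0) :
    0 < v ⬝ᵥ v := by
  refine lt_of_le_of_ne (Finset.sum_nonneg fun i _ => mul_self_nonneg _) ?_
  exact fun h => hv (dotProduct_self_eq_zero.mp h.symm)

/-- `DtᵀDt` is positive definite when `Dt` has full column rank. -/
lemma gram_posdef {n r : ℕ} (Dt : Matrix (Fin n) (Fin r) ℝ)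
    (hker : Function.Injective Dt.mulVecLin) : (Dtᵀ * Dt).PosDef := by
  rw [posDef_iff_dotProduct_mulVec]
  constructor
  · show _ᴴ = _
    rw [real_conjTranspose, transpose_mul, transpose_transpose]
  · intro x hx
    have hDx : Dt.mulVec x ≠ 0 := by
      intro h
      apply hx
      have : Dt.mulVecLin x = Dt.mulVecLin 0 := by simpa [mulVecLin_apply] using h
      exact hker this
    have heq : star x ⬝ᵥ (Dtᵀ * Dt).mulVec x = Dt.mulVec x ⬝ᵥ Dt.mulVec x := by
      rw [← mulVec_mulVec, dotProduct_mulVec, star_trivial, vecMul_transpose]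
    rw [heq]
    exact dotProduct_self_pos' hDx

/-- Let `D ∈ ℝ^{n×m}` with `1ᵀD = 0` and `rank D = n - 1`,
`Dt ∈ ℝ^{n×(n-1)}` with `1ᵀDt = 0` and `rank Dt = n - 1`, and
`Γ = diag(γ)` with `γ > 0`. With `Dt† = (DtᵀDt)⁻¹Dtᵀ` and the potential
`U(φ) = -1ᵀ Γ cos(Dᵀ Dt†ᵀ φ)`, for every `φ` whose associated angle vector
`Dᵀ Dt†ᵀ φ` lies componentwise in `(-π/2, π/2)`, the Hessian
`∇²U(φ) = (Dt† D) Γ diag(cos(Dᵀ Dt†ᵀ φ)) (Dt† D)ᵀ` is positive definite. -/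
theorem hessian_potential_posdef {n m : ℕ} (hn : 1 ≤ n)
    (D : Matrix (Fin n) (Fin m) ℝ) (Dt : Matrix (Fin n) (Fin (n - 1)) ℝ)
    (γ : Fin m → ℝ) (hγ : ∀ k, 0 < γ k)
    (hD1 : ∀ k, ∑ i, D i k = 0) (hDrank : D.rank = n - 1)
    (hDt1 : ∀ j, ∑ i, Dt i j = 0) (hDtrank : Dt.rank = n - 1)
    (φ : Fin (n - 1) → ℝ)
    (hsec : ∀ k, Dᵀ.mulVec (((Dtᵀ * Dt)⁻¹ * Dtᵀ)ᵀ.mulVec φ) k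
        ∈ Set.Ioo (-(π / 2)) (π / 2)) :
    (((Dtᵀ * Dt)⁻¹ * Dtᵀ * D)
      * Matrix.diagonal
          (fun k => γ k * Real.cos (Dᵀ.mulVec (((Dtᵀ * Dt)⁻¹ * Dtᵀ)ᵀ.mulVec φ) k))
      * ((Dtᵀ * Dt)⁻¹ * Dtᵀ * D)ᵀ).PosDef := by
  set Q : Matrix (Fin (n-1)) (Fin (n-1)) ℝ := Dtᵀ * Dt with hQ
  set d : Fin m → ℝ := fun k => γ k * Real.cos (Dᵀ.mulVec ((Q⁻¹ * Dtᵀ)ᵀ.mulVec φ) k) with hd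
  have hdpos : ∀ k, 0 < d k := fun k => mul_pos (hγ k) (Real.cos_pos_of_mem_Ioo (hsec k))
  -- injectivity of Dt
  have hDtinj : Function.Injective Dt.mulVecLin := by
    rw [← LinearMap.ker_eq_bot]
    have h1 := LinearMap.finrank_range_add_finrank_ker Dt.mulVecLin
    have h2 : Module.finrank ℝ (Fin (n-1) → ℝ) = n - 1 := by simp
    rw [h2] at h1
    have h3 : Module.finrank ℝ (LinearMap.range Dt.mulVecLin) = n - 1 := hDtrank
    have h4 : Module.finrank ℝ (LinearMap.ker Dt.mulVecLin) = 0 := by omega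
    exact Submodule.finrank_eq_zero.mp h4
  have hQpd : Q.PosDef := gram_posdef Dt hDtinj
  have hQunit : IsUnit Q.det := isUnit_iff_ne_zero.mpr hQpd.det_pos.ne'
  have hQsymm : Qᵀ = Q := by rw [hQ, transpose_mul, transpose_transpose]
  -- kernel of Dᵀ is the span of 1
  have hone : (1 : Fin n → ℝ) ≠ 0 := by
    intro h
    have := congrFun h ⟨0, hn⟩
    simp at this
  have honeker : (1 : Fin n → ℝ) ∈ LinearMap.ker Dᵀ.mulVecLin := by
    rw [LinearMap.mem_ker]
    ext k
    simp only [mulVecLin_apply, mulVec, dotProduct, transpose_apply, Pi.one_apply, mul_one,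
      Pi.zero_apply]
    exact hD1 k
  have hkerD : LinearMap.ker Dᵀ.mulVecLin = Submodule.span ℝ {(1 : Fin n → ℝ)} := by
    refine (Submodule.eq_of_le_of_finrank_le
      ((Submodule.span_singleton_le_iff_mem _ _).mpr honeker) ?_).symm
    have h1 := LinearMap.finrank_range_add_finrank_ker Dᵀ.mulVecLin
    have h2 : Module.finrank ℝ (Fin n → ℝ) = n := by simp
    rw [h2] at h1
    have h3 : Module.finrank ℝ (LinearMap.range Dᵀ.mulVecLin) = n - 1 := by
      have := Matrix.rank_transpose D
      rw [hDrank] at this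
      exact this
    have h5 : Module.finrank ℝ (LinearMap.ker Dᵀ.mulVecLin) = 1 := by omega
    rw [h5, finrank_span_singleton hone]
  -- main injectivity
  have hAinj : ∀ x : Fin (n-1) → ℝ, ((Q⁻¹ * Dtᵀ * D)ᵀ).mulVec x = 0 → x = 0 := by
    intro x hx
    have hy : Dᵀ.mulVec ((Q⁻¹ * Dtᵀ)ᵀ.mulVec x) = 0 := by
      rw [transpose_mul] at hx
      rw [← hx, ← mulVec_mulVec]
    have hmem : (Q⁻¹ * Dtᵀ)ᵀ.mulVec x ∈ Submodule.span ℝ {(1 : Fin n → ℝ)} := by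
      rw [← hkerD, LinearMap.mem_ker, mulVecLin_apply]
      exact hy
    obtain ⟨c, hc⟩ := Submodule.mem_span_singleton.mp hmem
    have hDt1' : Dtᵀ.mulVec (1 : Fin n → ℝ) = 0 := by
      ext j
      simp only [mulVec, dotProduct, transpose_apply, Pi.one_apply, mul_one, Pi.zero_apply]
      exact hDt1 j
    have hxeq : Dtᵀ.mulVec ((Q⁻¹ * Dtᵀ)ᵀ.mulVec x) = x := by
      rw [mulVec_mulVec, transpose_mul, transpose_nonsing_inv, hQsymm, transpose_transpose,
        ← Matrix.mul_assoc, ← hQ, Matrix.mul_nonsing_inv Q hQunit, Matrix.one_mulVec]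
    rw [← hxeq, ← hc, mulVec_smul, hDt1', smul_zero]
  rw [posDef_iff_dotProduct_mulVec]
  constructor
  · show _ᴴ = _
    rw [real_conjTranspose]
    simp [transpose_mul, transpose_transpose, diagonal_transpose, Matrix.mul_assoc]
  · intro x hx
    set A := Q⁻¹ * Dtᵀ * D with hA
    set y := Aᵀ.mulVec x with hy
    have hyne : y ≠ 0 := fun h => hx (hAinj x h)
    have key : star x ⬝ᵥ (A * diagonal d * Aᵀ).mulVec x = ∑ k, d k * (y k * y k) := by
      rw [star_trivial, ← mulVec_mulVec, ← mulVec_mulVec, dotProduct_mulVec,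
        show x ᵥ* A = Aᵀ.mulVec x from (mulVec_transpose A x).symm, ← hy]
      simp only [dotProduct, mulVec_diagonal]
      exact Finset.sum_congr rfl (fun k _ => by ring)
    rw [key]
    obtain ⟨k0, hk0⟩ := Function.ne_iff.mp hyne
    refine Finset.sum_pos' (fun k _ => mul_nonneg (hdpos k).le (mul_self_nonneg _))
      ⟨k0, Finset.mem_univ _, mul_pos (hdpos k0) (mul_self_pos.mpr hk0)⟩
end

section
/- Let A ∈ ℝ^{n×n} be positive semidefinite, ρ ≥ 0, and let b̄, P̄, μ̄_b, μ̄_g ∈ ℝ^n and λ̄ ∈ ℝ satisfy b̄ ≥ 0, P̄ ≥ 0, μ̄_b ≥ 0, μ̄_g ≥ 0, b̄ᵀμ̄_b = 0, P̄ᵀμ̄_g = 0. Then for all ω ∈ ℝ^n, λ ∈ ℝ, u ∈ ℝ^{n−1}, and all b, P_g ∈ ℝ^n with b ≥ 0 and P_g ≥ 0, the following identity and inequality hold: uᵀD_tᵀω + ωᵀ(−D_t u − Aω + P_g − P̄) + (b − b̄)ᵀ(P_g − g(b) − P̄ + g(b̄) − μ̄_b) + (P_g − P̄)ᵀ(1(λ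 − λ̄) − (b − b̄) + ρ 1 1ᵀ(P̄ − P_g) − ω − μ̄_g) + (λ − λ̄) 1ᵀ(P̄ − P_g) = −ωᵀAω − (b − b̄)ᵀ(g(b) − g(b̄)) − ρ(1ᵀ(P̄ − P_g))² − (b − b̄)ᵀμ̄_b − (P_g − P̄)ᵀμ̄_g ≤ 0. -/
open Finset

noncomputable section

open Matrix

/- The coupling terms of the primal–dual flow are skew and cancel (pairwise, or through the
common shift `λ - λ̄ + ρ 1ᵀ(P̄ - P_g)` against `1ᵀ(P_g - P̄)`), leaving `-ωᵀAω ≤ 0`, the penalty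
`-ρ (1ᵀ(P̄ - P_g))² ≤ 0`, the monotonicity term of the best responses (adding the optimality
inequalities of `g i (b i)` and `g i (b̄ i)` gives `(b - b̄)(g(b) - g(b̄)) ≥ 0`), and the
complementarity terms, where `b̄ᵀμ̄_b = 0` leaves `bᵀμ̄_b ≥ 0` (likewise for `P_g`). -/

theorem IsUniqueArgmaxProfit.sub_mul_sub_nonneg {Cf : ℝ → ℝ} {β β' P P' : ℝ}
    (hP : IsUniqueArgmaxProfit Cf β P) (hP' : IsUniqueArgmaxProfit Cf β' P') :
    0 ≤ (β - β') * (P - P') := by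
  have h := hP.2.1 P' hP'.1
  have h' := hP'.2.1 P hP.1
  nlinarith

theorem sum_sub_mul_nonneg_of_complementary {ι : Type*} [Fintype ι] {x xbar μ : ι → ℝ}
    (hx : ∀ i, 0 ≤ x i) (hμ : ∀ i, 0 ≤ μ i) (hcomp : ∑ i, xbar i * μ i = 0) :
    0 ≤ ∑ i, (x i - xbar i) * μ i := by
  simp only [sub_mul, sum_sub_distrib, hcomp, sub_zero]
  exact sum_nonneg fun i _ => mul_nonneg (hx i) (hμ i)

theorem sum_mul_transpose_mulVec {ι κ : Type*} [Fintype ι] [Fintype κ] (D : Matrix ι κ ℝ)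
    (ω : ι → ℝ) (u : κ → ℝ) :
    ∑ j, u j * Dᵀ.mulVec ω j = ∑ i, ω i * D.mulVec u i := by
  change u ⬝ᵥ Dᵀ *ᵥ ω = ω ⬝ᵥ D *ᵥ u
  rw [dotProduct_mulVec, vecMul_transpose, dotProduct_comm]

theorem lyapunov_derivative_eq {ι κ : Type*} [Fintype ι] [Fintype κ]
    (g : ι → ℝ → ℝ) (Dt : Matrix ι κ ℝ) (A : Matrix ι ι ℝ) (ρ : ℝ)
    (bbar Pbar μb μg : ι → ℝ) (lambar : ℝ) (ω : ι → ℝ) (lam : ℝ) (u : κ → ℝ)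
    (b Pg : ι → ℝ) :
    (∑ j, u j * Dtᵀ.mulVec ω j)
      + (∑ i, ω i * (-(Dt.mulVec u) i - A.mulVec ω i + Pg i - Pbar i))
      + (∑ i, (b i - bbar i) * (Pg i - g i (b i) - Pbar i + g i (bbar i) - μb i))
      + (∑ i, (Pg i - Pbar i) *
          ((lam - lambar) - (b i - bbar i) + ρ * (∑ j, (Pbar j - Pg j))
            - ω i - μg i))
      + (lam - lambar) * (∑ i, (Pbar i - Pg i))
      = -(∑ i, ω i * A.mulVec ω i)
        - (∑ i, (b i - bbar i) * (g i (b i) - g i (bbar i)))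
        - ρ * (∑ i, (Pbar i - Pg i)) ^ 2
        - (∑ i, (b i - bbar i) * μb i)
        - (∑ i, (Pg i - Pbar i) * μg i) := by
  set S := ∑ j, (Pbar j - Pg j) with hS
  have hdev : ∑ i, (Pg i - Pbar i) = -S := by
    rw [hS, ← sum_neg_distrib]
    exact sum_congr rfl fun i _ => by ring
  clear_value S
  have hcross : ∑ i, (Pg i - Pbar i) * ((lam - lambar) - (b i - bbar i) + ρ * S - ω i - μg i)
      = ∑ i, (Pg i - Pbar i) * (-(b i - bbar i) - ω i - μg i)
        + (lam - lambar + ρ * S) * ∑ i, (Pg i - Pbar i) := by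
    rw [mul_sum, ← sum_add_distrib]
    exact sum_congr rfl fun i _ => by ring
  have hpointwise : (∑ i, ω i * Dt.mulVec u i)
      + (∑ i, ω i * (-(Dt.mulVec u) i - A.mulVec ω i + Pg i - Pbar i))
      + (∑ i, (b i - bbar i) * (Pg i - g i (b i) - Pbar i + g i (bbar i) - μb i))
      + (∑ i, (Pg i - Pbar i) * (-(b i - bbar i) - ω i - μg i))
      + (∑ i, ω i * A.mulVec ω i)
      + (∑ i, (b i - bbar i) * (g i (b i) - g i (bbar i)))
      + (∑ i, (b i - bbar i) * μb i)
      + (∑ i, (Pg i - Pbar i) * μg i) = 0 := by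
    simp only [← sum_add_distrib]
    exact sum_eq_zero fun i _ => by ring
  rw [sum_mul_transpose_mulVec, hcross, hdev]
  linear_combination hpointwise

theorem lyapunov_derivative_nonpositive_general {n : ℕ}
    (C : Fin n → ℝ → ℝ)
    (g : Fin n → ℝ → ℝ) (hg : ∀ i β, IsUniqueArgmaxProfit (C i) β (g i β))
    (Dt : Matrix (Fin n) (Fin (n - 1)) ℝ)
    (A : Matrix (Fin n) (Fin n) ℝ) (hA : A.PosSemidef)
    (ρ : ℝ) (hρ : 0 ≤ ρ)
    (bbar Pbar μb μg : Fin n → ℝ) (lambar : ℝ)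
    (hμb : ∀ i, 0 ≤ μb i) (hμg : ∀ i, 0 ≤ μg i)
    (hcompb : ∑ i, bbar i * μb i = 0) (hcompg : ∑ i, Pbar i * μg i = 0)
    (ω : Fin n → ℝ) (lam : ℝ) (u : Fin (n - 1) → ℝ)
    (b Pg : Fin n → ℝ) (hb : ∀ i, 0 ≤ b i) (hPg : ∀ i, 0 ≤ Pg i) :
    ((∑ j, u j * Dtᵀ.mulVec ω j)
      + (∑ i, ω i * (-(Dt.mulVec u) i - A.mulVec ω i + Pg i - Pbar i))
      + (∑ i, (b i - bbar i) * (Pg i - g i (b i) - Pbar i + g i (bbar i) - μb i))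
      + (∑ i, (Pg i - Pbar i) *
          ((lam - lambar) - (b i - bbar i) + ρ * (∑ j, (Pbar j - Pg j))
            - ω i - μg i))
      + (lam - lambar) * (∑ i, (Pbar i - Pg i))
      = -(∑ i, ω i * A.mulVec ω i)
        - (∑ i, (b i - bbar i) * (g i (b i) - g i (bbar i)))
        - ρ * (∑ i, (Pbar i - Pg i)) ^ 2
        - (∑ i, (b i - bbar i) * μb i)
        - (∑ i, (Pg i - Pbar i) * μg i))
    ∧
    (-(∑ i, ω i * A.mulVec ω i)
        - (∑ i, (b i - bbar i) * (g i (b i) - g i (bbar i)))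
        - ρ * (∑ i, (Pbar i - Pg i)) ^ 2
        - (∑ i, (b i - bbar i) * μb i)
        - (∑ i, (Pg i - Pbar i) * μg i) ≤ 0) := by
  refine ⟨lyapunov_derivative_eq g Dt A ρ bbar Pbar μb μg lambar ω lam u b Pg, ?_⟩
  have hdissipation : 0 ≤ ∑ i, ω i * A.mulVec ω i := hA.dotProduct_mulVec_nonneg ω
  have hmonotone : 0 ≤ ∑ i, (b i - bbar i) * (g i (b i) - g i (bbar i)) :=
    sum_nonneg fun i _ => (hg i (b i)).sub_mul_sub_nonneg (hg i (bbar i))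
  have hpenalty : 0 ≤ ρ * (∑ i, (Pbar i - Pg i)) ^ 2 := by positivity
  have hbids := sum_sub_mul_nonneg_of_complementary hb hμb hcompb
  have hpower := sum_sub_mul_nonneg_of_complementary hPg hμg hcompg
  linarith

/-- The Lyapunov-derivative identity and inequality
`⟨∇V(x), F(x)⟩ ≤ 0` along the closed-loop bidding/power-network dynamics
(with `σ = 1`), relative to an equilibrium with multipliers `μ̄_b, μ̄_g`. -/
theorem lyapunov_derivative_nonpositive {n : ℕ}
    (C C' : Fin n → ℝ → ℝ) (hC : ∀ i, CostAssumptions (C i) (C' i))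
    (g : Fin n → ℝ → ℝ) (hg : ∀ i β, IsUniqueArgmaxProfit (C i) β (g i β))
    (Dt : Matrix (Fin n) (Fin (n - 1)) ℝ)
    (A : Matrix (Fin n) (Fin n) ℝ) (hA : A.PosSemidef)
    (ρ : ℝ) (hρ : 0 ≤ ρ)
    (bbar Pbar μb μg : Fin n → ℝ) (lambar : ℝ)
    (hbbar : ∀ i, 0 ≤ bbar i) (hPbar : ∀ i, 0 ≤ Pbar i)
    (hμb : ∀ i, 0 ≤ μb i) (hμg : ∀ i, 0 ≤ μg i)
    (hcompb : ∑ i, bbar i * μb i = 0) (hcompg : ∑ i, Pbar i * μg i = 0)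
    (ω : Fin n → ℝ) (lam : ℝ) (u : Fin (n - 1) → ℝ)
    (b Pg : Fin n → ℝ) (hb : ∀ i, 0 ≤ b i) (hPg : ∀ i, 0 ≤ Pg i) :
    ((∑ j, u j * Dtᵀ.mulVec ω j)
      + (∑ i, ω i * (-(Dt.mulVec u) i - A.mulVec ω i + Pg i - Pbar i))
      + (∑ i, (b i - bbar i) * (Pg i - g i (b i) - Pbar i + g i (bbar i) - μb i))
      + (∑ i, (Pg i - Pbar i) *
          ((lam - lambar) - (b i - bbar i) + ρ * (∑ j, (Pbar j - Pg j))
            - ω i - μg i))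
      + (lam - lambar) * (∑ i, (Pbar i - Pg i))
      = -(∑ i, ω i * A.mulVec ω i)
        - (∑ i, (b i - bbar i) * (g i (b i) - g i (bbar i)))
        - ρ * (∑ i, (Pbar i - Pg i)) ^ 2
        - (∑ i, (b i - bbar i) * μb i)
        - (∑ i, (Pg i - Pbar i) * μg i))
    ∧
    (-(∑ i, ω i * A.mulVec ω i)
        - (∑ i, (b i - bbar i) * (g i (b i) - g i (bbar i)))
        - ρ * (∑ i, (Pbar i - Pg i)) ^ 2
        - (∑ i, (b i - bbar i) * μb i)
        - (∑ i, (Pg i - Pbar i) * μg i) ≤ 0) :=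
  lyapunov_derivative_nonpositive_general C g hg Dt A hA ρ hρ bbar Pbar μb μg lambar hμb hμg hcompb
    hcompg ω lam u b Pg hb hPg
end
end
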